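/- arXiv:1603.01295 — 4 statements merged into one kernel-verified Lean document; each statement's English description precedes it below -/
import Mathlib

section
/- Let n, q ≥ 1, let Z be a real n×q matrix, let x ∈ ℝ^n, and let λ > 0. Suppose γ̂ ∈ ℝ^q minimizes γ ↦ ‖x − Zγ‖₂²/n + 2λ‖γ‖₁ over ℝ^q, and define τ̂² = ‖x − Zγ̂‖₂²/n + λ‖γ̂‖₁. Then xᵀ(x − Zγ̂)/n = τ̂². -/
open scoped BigOperators

/-- Normalization identity of the nodewise Lasso: if `gammaHat` minimizes
`‖x - Zγ‖₂²/n + 2λ‖γ‖₁` and `τ̂² = ‖x - Z gammaHat‖₂²/n + λ‖gammaHat‖₁`, then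
`xᵀ(x - Z gammaHat)/n = τ̂²`. -/
theorem stmt2 {n q : ℕ} (hn : 1 ≤ n) (hq : 1 ≤ q)
    (Z : Matrix (Fin n) (Fin q) ℝ) (x : Fin n → ℝ) (lam : ℝ) (hlam : 0 < lam)
    (gammaHat : Fin q → ℝ)
    (hmin : ∀ γ : Fin q → ℝ,
      (∑ i, (x i - Z.mulVec gammaHat i) ^ 2) / n + 2 * lam * ∑ j, |gammaHat j| ≤
      (∑ i, (x i - Z.mulVec γ i) ^ 2) / n + 2 * lam * ∑ j, |γ j|)
    (tau2 : ℝ)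
    (htau : tau2 =
      (∑ i, (x i - Z.mulVec gammaHat i) ^ 2) / n + lam * ∑ j, |gammaHat j|) :
    (∑ i, x i * (x i - Z.mulVec gammaHat i)) / n = tau2 := by
  set v : Fin n → ℝ := Z.mulVec gammaHat with hv
  set R : ℝ := ∑ i, (x i - v i) ^ 2 with hR
  set A : ℝ := ∑ i, (x i - v i) * v i with hA
  set B : ℝ := ∑ i, (v i) ^ 2 with hB
  set S : ℝ := ∑ j, |gammaHat j| with hS
  clear_value v R A B S
  have hn' : (0 : ℝ) < n := by exact_mod_cast hn
  have hBpos : 0 ≤ B := by rw [hB]; exact Finset.sum_nonneg fun i _ => sq_nonneg _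
  -- key inequality for scaled vectors s • gammaHat with s > 0
  have key : ∀ s : ℝ, 0 < s →
      R / n + 2 * lam * S ≤ (R + 2 * (1 - s) * A + (1 - s) ^ 2 * B) / n
        + 2 * lam * (s * S) := by
    intro s hs
    have h := hmin (s • gammaHat)
    have hmv : Z.mulVec (s • gammaHat) = s • v := by
      rw [hv, Matrix.mulVec_smul]
    have habs : ∑ j, |(s • gammaHat) j| = s * S := by
      rw [hS, Finset.mul_sum]
      exact Finset.sum_congr rfl fun j _ => by
        simp [abs_mul, abs_of_pos hs]
    have hsq : ∑ i, (x i - Z.mulVec (s • gammaHat) i) ^ 2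
        = R + 2 * (1 - s) * A + (1 - s) ^ 2 * B := by
      rw [hmv, hR, hA, hB, Finset.mul_sum, Finset.mul_sum,
        ← Finset.sum_add_distrib, ← Finset.sum_add_distrib]
      exact Finset.sum_congr rfl fun i _ => by simp only [Pi.smul_apply, smul_eq_mul]; ring
    rw [habs, hsq] at h
    exact h
  -- deduce A / n = lam * S
  have hC : A / n - lam * S = 0 := by
    by_contra hne
    set C : ℝ := A / n - lam * S with hCdef
    have hCpos : 0 < |C| := abs_pos.mpr hne
    set K : ℝ := B / (2 * n) + 1 with hK
    have hKpos : 0 < K := by positivity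
    set ε : ℝ := min (|C| / (2 * K)) (1 / 2) with hε
    clear_value C K ε
    have hεpos : 0 < ε := by rw [hε]; exact lt_min (by positivity) (by norm_num)
    have hεle : ε ≤ 1 / 2 := by rw [hε]; exact min_le_right _ _
    have bound : ∀ δ : ℝ, δ = ε ∨ δ = -ε → 2 * δ * C ≤ δ ^ 2 * B / n := by
      intro δ hδ
      have hs : 0 < 1 + δ := by
        rcases hδ with h | h <;> subst h <;> nlinarith
      have h := key (1 + δ) hs
      have : 0 ≤ (2 * (-δ) * A + δ ^ 2 * B) / n + 2 * lam * δ * S := by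
        have h2 : (R + 2 * (1 - (1 + δ)) * A + (1 - (1 + δ)) ^ 2 * B) / n
            = R / n + (2 * (-δ) * A + δ ^ 2 * B) / n := by ring_nf
        nlinarith [h]
      have hCA : C = A / n - lam * S := hCdef
      have : 2 * δ * (A / n - lam * S) ≤ δ ^ 2 * B / n := by
        have hdiv : (2 * (-δ) * A + δ ^ 2 * B) / n
            = -(2 * δ) * (A / n) + δ ^ 2 * B / n := by field_simp
        nlinarith [this]
      rwa [← hCA] at this
    have h1 := bound ε (Or.inl rfl)
    have h2 := bound (-ε) (Or.inr rfl)
    have h3 : 2 * ε * |C| ≤ ε ^ 2 * B / n := by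
      rcases abs_cases C with ⟨he, _⟩ | ⟨he, _⟩
      · rw [he]; exact h1
      · calc 2 * ε * |C| = 2 * (-ε) * C := by rw [he]; ring
          _ ≤ (-ε) ^ 2 * B / n := h2
          _ = ε ^ 2 * B / n := by ring
    have hεK2 : ε * (2 * K) ≤ |C| := by
      have hm : ε ≤ |C| / (2 * K) := by rw [hε]; exact min_le_left _ _
      have h2K : (0:ℝ) < 2 * K := by positivity
      calc ε * (2 * K) ≤ |C| / (2 * K) * (2 * K) :=
            mul_le_mul_of_nonneg_right hm h2K.le
        _ = |C| := div_mul_cancel₀ _ h2K.ne'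
    have hD : B / ↑n = 2 * (K - 1) := by
      rw [hK]; field_simp; ring
    have h3' : 2 * ε * |C| ≤ ε ^ 2 * (2 * (K - 1)) := by
      calc 2 * ε * |C| ≤ ε ^ 2 * B / ↑n := h3
        _ = ε ^ 2 * (B / ↑n) := by ring
        _ = ε ^ 2 * (2 * (K - 1)) := by rw [hD]
    have hprod : ε * (ε * (2 * K)) ≤ ε * |C| := mul_le_mul_of_nonneg_left hεK2 hεpos.le
    nlinarith [h3', hprod, mul_pos hεpos hCpos, sq_nonneg ε]
  -- conclude
  have hsum : (∑ i, x i * (x i - v i)) = R + A := by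
    rw [hR, hA, ← Finset.sum_add_distrib]
    exact Finset.sum_congr rfl fun i _ => by ring
  rw [htau, hsum]
  have : A / n = lam * S := by linarith
  rw [add_div, this]
end

section
/- Let n ≥ 1 and p ≥ 2, let X be a real n×p matrix with columns X_1,…,X_p, fix j ∈ {1,…,p} and λ_j > 0. Let X_{−j} denote the n×(p−1) matrix obtained from X by deleting its j-th column, and suppose γ̂_j = (γ̂_{j,k})_{k≠j} ∈ ℝ^{p−1} minimizes γ ↦ ‖X_j − X_{−j}γ‖₂²/n + 2λ_j‖γ‖₁. Define τ̂_j² = ‖X_j − X_{−j}γ̂_j‖₂²/n + λ_j‖γ̂_j‖₁ and assume τ̂_j² > 0. Define Θ̂_j ∈ ℝ^p by (Θ̂_j)_j = 1/τ̂_j² and (Θ̂_j)_k = −γ̂_{j,k}/τ̂_j² for k ≠ j, and set Σ̂ = XᵀX/n. Then (Σ̂ Θ̂_j)_j = 1 and max_{1≤k≤p} |(Σ̂ Θ̂_j − e_j)_k| ≤ λ_j/τ̂_j², where e_j ∈ ℝ^p is the j-th standard basis vector. -/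
open scoped BigOperators

lemma sum_split0 {p : ℕ} (j : Fin p) (f : Fin p → ℝ) :
    ∑ k, f k = f j + ∑ k : {k : Fin p // k ≠ j}, f k := by
  rw [Fintype.sum_eq_add_sum_compl j]
  congr 1
  exact (Finset.sum_subtype (p := fun k => k ≠ j) ({j}ᶜ : Finset (Fin p)) (fun x => by simp) f)

lemma lin_aux0 {A C : ℝ} (hA : 0 ≤ A) (h : ∀ t : ℝ, 0 < t → t < 1 → 0 ≤ A * t^2 + C * t) : 0 ≤ C := by
  by_contra hC
  push_neg at hC
  have hC' : 0 < -C := by linarith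
  set t := min (1/2 : ℝ) (-C/(2*A+2)) with ht
  have ht0 : 0 < t := lt_min (by norm_num) (by positivity)
  have ht1 : t < 1 := lt_of_le_of_lt (min_le_left _ _) (by norm_num)
  have h2 := h t ht0 ht1
  have h3 : t ≤ -C/(2*A+2) := min_le_right _ _
  have h4 : A * t ≤ A * (-C/(2*A+2)) := mul_le_mul_of_nonneg_left h3 hA
  have h6 : (-C/(2*A+2)) * (2*A+2) = -C := div_mul_cancel₀ _ (by positivity)
  nlinarith [sq_nonneg t, mul_pos ht0 hC']

/-- The `j`-th row `ThetaHat` of the nodewise Lasso estimator of the inverse Gram matrix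
satisfies `(Σ̂ ThetaHat)_j = 1` and `‖Σ̂ ThetaHat - e_j‖_∞ ≤ λ_j / τ̂_j²`. -/
theorem stmt3 {n p : ℕ} (hn : 1 ≤ n) (hp : 2 ≤ p)
    (X : Matrix (Fin n) (Fin p) ℝ) (j : Fin p) (lam : ℝ) (hlam : 0 < lam)
    (gammaHat : {k : Fin p // k ≠ j} → ℝ)
    (hmin : ∀ γ : {k : Fin p // k ≠ j} → ℝ,
      (∑ i, (X i j - ∑ k : {k : Fin p // k ≠ j}, X i (k : Fin p) * gammaHat k) ^ 2) / n
        + 2 * lam * ∑ k, |gammaHat k| ≤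
      (∑ i, (X i j - ∑ k : {k : Fin p // k ≠ j}, X i (k : Fin p) * γ k) ^ 2) / n
        + 2 * lam * ∑ k, |γ k|)
    (tau2 : ℝ)
    (htau : tau2 =
      (∑ i, (X i j - ∑ k : {k : Fin p // k ≠ j}, X i (k : Fin p) * gammaHat k) ^ 2) / n
        + lam * ∑ k, |gammaHat k|)
    (htau_pos : 0 < tau2)
    (ThetaHat : Fin p → ℝ)
    (hTheta : ThetaHat = fun k => if h : k = j then 1 / tau2 else -gammaHat ⟨k, h⟩ / tau2)
    (Sigmahat : Matrix (Fin p) (Fin p) ℝ)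
    (hSigma : Sigmahat = (n : ℝ)⁻¹ • (X.transpose * X)) :
    Sigmahat.mulVec ThetaHat j = 1 ∧
    ∀ k : Fin p, |(Sigmahat.mulVec ThetaHat - Pi.single j (1 : ℝ) : Fin p → ℝ) k| ≤ lam / tau2 := by
  have hn0 : (0:ℝ) < n := by exact_mod_cast hn
  obtain ⟨u, hu⟩ : ∃ u : Fin n → ℝ,
      u = fun i => ∑ k : {k : Fin p // k ≠ j}, X i (k : Fin p) * gammaHat k := ⟨_, rfl⟩
  obtain ⟨r, hr⟩ : ∃ r : Fin n → ℝ, r = fun i => X i j - u i := ⟨_, rfl⟩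
  have hru : ∀ i, r i = X i j - u i := fun i => by rw [hr]
  have huu : ∀ i, u i = ∑ k : {k : Fin p // k ≠ j}, X i (k : Fin p) * gammaHat k :=
    fun i => by rw [hu]
  obtain ⟨R, hR⟩ : ∃ R : ℝ, R = ∑ i, r i ^ 2 := ⟨_, rfl⟩
  obtain ⟨L1, hL1⟩ : ∃ L1 : ℝ, L1 = ∑ k, |gammaHat k| := ⟨_, rfl⟩
  have hminR : ∀ γ : {k : Fin p // k ≠ j} → ℝ,
      R / n + 2 * lam * L1 ≤
      (∑ i, (X i j - ∑ k : {k : Fin p // k ≠ j}, X i (k : Fin p) * γ k) ^ 2) / n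
        + 2 * lam * ∑ k, |γ k| := by
    intro γ
    have h := hmin γ
    rw [hR, hL1]
    simpa only [hr, hu] using h
  have htauR : tau2 = R / n + lam * L1 := by
    rw [hR, hL1]; simpa only [hr, hu] using htau
  -- Claim A : KKT subgradient bound
  have claimA : ∀ k₀ : {k : Fin p // k ≠ j}, |∑ i, X i (k₀ : Fin p) * r i| ≤ lam * n := by
    intro k₀
    obtain ⟨D, hD⟩ : ∃ D : ℝ, D = ∑ i, X i (k₀ : Fin p) * r i := ⟨_, rfl⟩
    obtain ⟨Q, hQ⟩ : ∃ Q : ℝ, Q = ∑ i, (X i (k₀ : Fin p)) ^ 2 := ⟨_, rfl⟩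
    have hQ0 : 0 ≤ Q := hQ ▸ Finset.sum_nonneg fun _ _ => sq_nonneg _
    have key : ∀ t : ℝ, 0 ≤ (Q/n) * t^2 - 2*t*(D/n) + 2*lam*|t| := by
      intro t
      have hsum_t : ∀ i, ∑ k : {k : Fin p // k ≠ j},
          X i (k : Fin p) * (gammaHat k + if k = k₀ then t else 0)
          = u i + X i (k₀ : Fin p) * t := by
        intro i
        simp only [mul_add, Finset.sum_add_distrib, mul_ite, mul_zero]
        rw [Finset.sum_ite_eq' Finset.univ k₀ (fun k => X i (k : Fin p) * t)]
        simp [huu]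
      have hobj : ∑ i, (X i j - ∑ k : {k : Fin p // k ≠ j},
          X i (k : Fin p) * (gammaHat k + if k = k₀ then t else 0)) ^ 2
          = R - 2*t*D + t^2*Q := by
        have step : ∀ i, (X i j - (u i + X i (k₀ : Fin p) * t)) ^ 2
            = r i ^ 2 - 2*t*(X i (k₀ : Fin p) * r i) + t^2 * (X i (k₀ : Fin p))^2 := by
          intro i; rw [hru]; ring
        calc ∑ i, (X i j - ∑ k : {k : Fin p // k ≠ j},
              X i (k : Fin p) * (gammaHat k + if k = k₀ then t else 0)) ^ 2
            = ∑ i, (r i ^ 2 - 2*t*(X i (k₀ : Fin p) * r i) + t^2 * (X i (k₀ : Fin p))^2) := by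
              refine Finset.sum_congr rfl fun i _ => ?_
              rw [hsum_t i, step i]
          _ = R - 2*t*D + t^2*Q := by
              rw [Finset.sum_add_distrib, Finset.sum_sub_distrib, ← Finset.mul_sum,
                ← Finset.mul_sum, hR, hD, hQ]
      have habs : ∑ k : {k : Fin p // k ≠ j}, |gammaHat k + if k = k₀ then t else 0|
          ≤ L1 + |t| := by
        calc ∑ k : {k : Fin p // k ≠ j}, |gammaHat k + if k = k₀ then t else 0|
            ≤ ∑ k : {k : Fin p // k ≠ j}, (|gammaHat k| + if k = k₀ then |t| else 0) := by
              refine Finset.sum_le_sum fun k _ => ?_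
              by_cases hk : k = k₀ <;> simp [hk, abs_add_le]
          _ = L1 + |t| := by
              rw [Finset.sum_add_distrib, Finset.sum_ite_eq' Finset.univ k₀ (fun _ => |t|), hL1]
              simp
      have h1 := hminR (fun k => gammaHat k + if k = k₀ then t else 0)
      rw [hobj] at h1
      have h2 : 2 * lam * ∑ k : {k : Fin p // k ≠ j}, |gammaHat k + if k = k₀ then t else 0|
          ≤ 2 * lam * (L1 + |t|) :=
        mul_le_mul_of_nonneg_left habs (by positivity)
      have h3 : (R - 2*t*D + t^2*Q)/n = R/n - 2*t*(D/n) + t^2*(Q/n) := by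
        field_simp
      rw [h3] at h1
      linarith only [h1, h2]
    have hub : 0 ≤ 2*lam - 2*(D/(n:ℝ)) := by
      refine lin_aux0 (A := Q/(n:ℝ)) (by positivity) ?_
      intro t ht0 ht1
      have h := key t
      rw [abs_of_pos ht0] at h
      linarith only [h]
    have hlb : 0 ≤ 2*lam + 2*(D/(n:ℝ)) := by
      refine lin_aux0 (A := Q/(n:ℝ)) (by positivity) ?_
      intro t ht0 ht1
      have h := key (-t)
      rw [abs_neg, abs_of_pos ht0] at h
      ring_nf at h ⊢
      linarith only [h]
    rw [← hD, abs_le]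
    have e1 : D / (n:ℝ) ≤ lam := by linarith
    have e2 : -lam ≤ D / (n:ℝ) := by linarith
    constructor
    · linarith only [(le_div_iff₀ hn0).mp e2]
    · linarith only [(div_le_iff₀ hn0).mp e1]
  -- Claim B : scaling optimality
  have claimB : ∑ i, u i * r i = lam * n * L1 := by
    obtain ⟨UR, hUR⟩ : ∃ UR : ℝ, UR = ∑ i, u i * r i := ⟨_, rfl⟩
    obtain ⟨U2, hU2⟩ : ∃ U2 : ℝ, U2 = ∑ i, u i ^ 2 := ⟨_, rfl⟩
    have hU20 : 0 ≤ U2 := hU2 ▸ Finset.sum_nonneg fun _ _ => sq_nonneg _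
    have key : ∀ t : ℝ, -1 < t →
        0 ≤ (U2/n) * t^2 + (2*lam*L1 - 2*(UR/n)) * t := by
      intro t ht
      have hsum_t : ∀ i, ∑ k : {k : Fin p // k ≠ j},
          X i (k : Fin p) * ((1+t) * gammaHat k) = (1+t) * u i := by
        intro i
        rw [huu, Finset.mul_sum]
        refine Finset.sum_congr rfl fun k _ => by ring
      have hobj : ∑ i, (X i j - ∑ k : {k : Fin p // k ≠ j},
          X i (k : Fin p) * ((1+t) * gammaHat k)) ^ 2
          = R - 2*t*UR + t^2*U2 := by
        calc ∑ i, (X i j - ∑ k : {k : Fin p // k ≠ j},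
              X i (k : Fin p) * ((1+t) * gammaHat k)) ^ 2
            = ∑ i, (r i ^ 2 - 2*t*(u i * r i) + t^2 * u i ^ 2) := by
              refine Finset.sum_congr rfl fun i _ => ?_
              rw [hsum_t i, hru i]
              ring
          _ = R - 2*t*UR + t^2*U2 := by
              rw [Finset.sum_add_distrib, Finset.sum_sub_distrib, ← Finset.mul_sum,
                ← Finset.mul_sum, hR, hUR, hU2]
      have habs : ∑ k : {k : Fin p // k ≠ j}, |(1+t) * gammaHat k| = (1+t) * L1 := by
        rw [hL1, Finset.mul_sum]
        refine Finset.sum_congr rfl fun k _ => ?_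
        rw [abs_mul, abs_of_pos (by linarith : (0:ℝ) < 1 + t)]
      have h1 := hminR (fun k => (1+t) * gammaHat k)
      rw [hobj, habs] at h1
      have h3 : (R - 2*t*UR + t^2*U2)/n = R/n - 2*t*(UR/n) + t^2*(U2/n) := by
        field_simp
      rw [h3] at h1
      ring_nf at h1 ⊢
      linarith only [h1]
    have h1 : 0 ≤ 2*lam*L1 - 2*(UR/(n:ℝ)) := by
      refine lin_aux0 (A := U2/(n:ℝ)) (by positivity) ?_
      intro t ht0 ht1
      exact key t (by linarith)
    have h2 : 0 ≤ 2*(UR/(n:ℝ)) - 2*lam*L1 := by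
      refine lin_aux0 (A := U2/(n:ℝ)) (by positivity) ?_
      intro t ht0 ht1
      have h := key (-t) (by linarith)
      ring_nf at h ⊢
      linarith only [h]
    have hUReq : UR / (n:ℝ) = lam * L1 := by linarith only [h1, h2]
    rw [← hUR]
    have := (div_eq_iff (ne_of_gt hn0)).mp hUReq
    rw [this]; ring
  -- row formula
  have hinner : ∀ i, ∑ m, X i m * ThetaHat m = r i / tau2 := by
    intro i
    rw [sum_split0 j (fun m => X i m * ThetaHat m)]
    simp only [hTheta, dite_true]
    have hrest : ∑ k : {k : Fin p // k ≠ j}, X i (k : Fin p) *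
        (if h : (k : Fin p) = j then 1 / tau2 else -gammaHat ⟨(k : Fin p), h⟩ / tau2)
        = -(u i) / tau2 := by
      rw [huu, neg_div, Finset.sum_div, ← Finset.sum_neg_distrib]
      refine Finset.sum_congr rfl fun k _ => ?_
      rw [dif_neg k.2, Subtype.coe_eta]
      ring
    rw [hrest, hru]
    field_simp
    ring
  have hmv : ∀ k, Sigmahat.mulVec ThetaHat k = (∑ i, X i k * r i) / (n * tau2) := by
    intro k
    rw [hSigma]
    simp only [Matrix.mulVec, dotProduct, Matrix.smul_apply, Matrix.mul_apply,
      Matrix.transpose_apply, smul_eq_mul]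
    calc ∑ m, (n:ℝ)⁻¹ * (∑ i, X i k * X i m) * ThetaHat m
        = (n:ℝ)⁻¹ * ∑ m, ∑ i, X i k * X i m * ThetaHat m := by
          rw [Finset.mul_sum]
          refine Finset.sum_congr rfl fun m _ => ?_
          rw [mul_assoc, Finset.sum_mul]
      _ = (n:ℝ)⁻¹ * ∑ i, X i k * (∑ m, X i m * ThetaHat m) := by
          rw [Finset.sum_comm]
          congr 1
          refine Finset.sum_congr rfl fun i _ => ?_
          rw [Finset.mul_sum]
          refine Finset.sum_congr rfl fun m _ => by ring
      _ = (∑ i, X i k * r i) / (n * tau2) := by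
          have hs : ∑ i, X i k * (∑ m, X i m * ThetaHat m) = (∑ i, X i k * r i) / tau2 := by
            rw [Finset.sum_div]
            refine Finset.sum_congr rfl fun i _ => ?_
            rw [hinner i]; ring
          rw [hs, inv_mul_eq_div, div_div, mul_comm tau2 ((n:ℝ))]
  have hXjr : ∑ i, X i j * r i = n * tau2 := by
    have step : ∀ i, X i j * r i = r i ^ 2 + u i * r i := by
      intro i
      rw [hru i]
      ring
    rw [Finset.sum_congr rfl fun i _ => step i, Finset.sum_add_distrib, ← hR, claimB, htauR]
    field_simp
  have hgoal1 : Sigmahat.mulVec ThetaHat j = 1 := by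
    rw [hmv j, hXjr]
    exact div_self (by positivity)
  refine ⟨hgoal1, fun k => ?_⟩
  by_cases hk : k = j
  · subst hk
    simp [Pi.sub_apply, hgoal1, Pi.single_eq_same]
    positivity
  · have hD := claimA ⟨k, hk⟩
    have hsingle : (Pi.single j (1:ℝ) : Fin p → ℝ) k = 0 := by simp [hk]
    rw [Pi.sub_apply, hsingle, sub_zero, hmv k]
    rw [abs_div, abs_of_pos (by positivity : (0:ℝ) < n * tau2)]
    rw [div_le_div_iff₀ (by positivity) htau_pos]
    calc |∑ i, X i k * r i| * tau2 ≤ (lam * n) * tau2 := by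
          exact mul_le_mul_of_nonneg_right hD (le_of_lt htau_pos)
      _ = lam * (n * tau2) := by ring
end

section
/- Let n ≥ 1 and p ≥ 2, and let X be a real n×p matrix with columns X_1,…,X_p. For each j ∈ {1,…,p}, let λ_j > 0, let γ̂_j ∈ ℝ^{p−1} minimize γ ↦ ‖X_j − X_{−j}γ‖₂²/n + 2λ_j‖γ‖₁ (where X_{−j} is X without its j-th column), set τ̂_j² = ‖X_j − X_{−j}γ̂_j‖₂²/n + λ_j‖γ̂_j‖₁ and assume τ̂_j² > 0, and define Θ̂_j ∈ ℝ^p by (Θ̂_j)_j = 1/τ̂_j², (Θ̂_j)_k = −γ̂_{j,k}/τ̂_j² for k ≠ j. Let Θ̂ be the p×p matrix whose j-th row is Θ̂_j and let Σ̂ = XᵀX/n. Then for every v ∈ ℝ^p, ‖(Θ̂Σ̂ − I_p)v‖_∞ ≤ (max_{1≤j≤p} λ_j/τ̂_j²)·‖v‖₁. -/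
open scoped BigOperators

lemma aux_eps_le (a b C : ℝ) (hC : 0 ≤ C)
    (h : ∀ ε : ℝ, 0 < ε → ε ≤ 1 → a ≤ b + ε * C) : a ≤ b := by
  refine le_of_forall_pos_le_add fun ε hε => ?_
  have hC1 : 0 < C + 1 := by linarith
  have hε' : 0 < min 1 (ε / (C + 1)) := lt_min one_pos (by positivity)
  have h1 := h _ hε' (min_le_left _ _)
  have h2 : min 1 (ε / (C + 1)) * C ≤ ε := by
    have hm : min 1 (ε / (C + 1)) ≤ ε / (C + 1) := min_le_right _ _
    have h3 : (ε / (C + 1)) * C ≤ ε := by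
      rw [div_mul_eq_mul_div, div_le_iff₀ hC1]; nlinarith
    nlinarith
  linarith

/-- Sup-norm bound for the nodewise-Lasso relaxed inverse: for every `v`,
`‖(Θ̂Σ̂ - I)v‖_∞ ≤ (max_j λ_j/τ̂_j²)·‖v‖₁`. -/
theorem stmt5 {n p : ℕ} (hn : 1 ≤ n) (hp : 2 ≤ p)
    (X : Matrix (Fin n) (Fin p) ℝ) (lam : Fin p → ℝ) (hlam : ∀ j, 0 < lam j)
    (gammaHat : ∀ j : Fin p, {k : Fin p // k ≠ j} → ℝ)
    (hmin : ∀ j : Fin p, ∀ γ : {k : Fin p // k ≠ j} → ℝ,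
      (∑ i, (X i j - ∑ k : {k : Fin p // k ≠ j}, X i (k : Fin p) * gammaHat j k) ^ 2) / n
        + 2 * lam j * ∑ k, |gammaHat j k| ≤
      (∑ i, (X i j - ∑ k : {k : Fin p // k ≠ j}, X i (k : Fin p) * γ k) ^ 2) / n
        + 2 * lam j * ∑ k, |γ k|)
    (tau2 : Fin p → ℝ)
    (htau : ∀ j, tau2 j =
      (∑ i, (X i j - ∑ k : {k : Fin p // k ≠ j}, X i (k : Fin p) * gammaHat j k) ^ 2) / n
        + lam j * ∑ k, |gammaHat j k|)
    (htau_pos : ∀ j, 0 < tau2 j)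
    (ThetaHat : Matrix (Fin p) (Fin p) ℝ)
    (hTheta : ∀ j k, ThetaHat j k =
      if h : k = j then 1 / tau2 j else -gammaHat j ⟨k, h⟩ / tau2 j)
    (Sigmahat : Matrix (Fin p) (Fin p) ℝ)
    (hSigma : Sigmahat = (n : ℝ)⁻¹ • (X.transpose * X)) :
    ∀ v : Fin p → ℝ, ∀ l : Fin p,
      |(ThetaHat * Sigmahat - 1).mulVec v l| ≤
        (Finset.univ.sup' (Finset.univ_nonempty_iff.mpr ⟨⟨0, by omega⟩⟩)
          fun j => lam j / tau2 j) * ∑ k, |v k| := by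
  intro v l
  have hτ : 0 < tau2 l := htau_pos l
  have hlamp : 0 < lam l := hlam l
  have hn0 : (0:ℝ) < n := by
    have : 0 < n := hn
    exact_mod_cast this
  set γ : {k : Fin p // k ≠ l} → ℝ := gammaHat l with hγdef
  set r : Fin n → ℝ :=
    fun i => X i l - ∑ k : {k : Fin p // k ≠ l}, X i (k : Fin p) * γ k with hrdef
  set S : ℝ := ∑ i, r i ^ 2 with hSdef
  set L1 : ℝ := ∑ k : {k : Fin p // k ≠ l}, |γ k| with hL1
  -- residual sum expansion helper
  -- off-diagonal key inequality
  have key : ∀ (t : ℝ) (k0 : {k : Fin p // k ≠ l}),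
      2 * t * ((∑ i, X i (k0 : Fin p) * r i) / n) ≤
        t ^ 2 * ((∑ i, (X i (k0 : Fin p)) ^ 2) / n) + 2 * lam l * |t| := by
    intro t k0
    have hm := hmin l (fun m => γ m + if m = k0 then t else 0)
    have hres : ∀ i, X i l - (∑ k : {k : Fin p // k ≠ l},
        X i (k : Fin p) * (γ k + if k = k0 then t else 0))
        = r i - t * X i (k0 : Fin p) := by
      intro i
      have e : (∑ k : {k : Fin p // k ≠ l},
          X i (k : Fin p) * (γ k + if k = k0 then t else 0))
          = (∑ k : {k : Fin p // k ≠ l}, X i (k : Fin p) * γ k)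
            + t * X i (k0 : Fin p) := by
        simp only [mul_add, Finset.sum_add_distrib, mul_ite, mul_zero]
        rw [Finset.sum_ite_eq' Finset.univ k0 (fun k => X i (k : Fin p) * t)]
        simp [mul_comm]
      rw [e, hrdef]; ring
    have hsq : (∑ i, (X i l - ∑ k : {k : Fin p // k ≠ l},
        X i (k : Fin p) * (γ k + if k = k0 then t else 0)) ^ 2)
        = S - 2 * t * (∑ i, X i (k0 : Fin p) * r i)
          + t ^ 2 * ∑ i, (X i (k0 : Fin p)) ^ 2 := by
      simp only [hres, hSdef]
      rw [Finset.mul_sum, Finset.mul_sum, ← Finset.sum_sub_distrib,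
        ← Finset.sum_add_distrib]
      exact Finset.sum_congr rfl fun i _ => by ring
    have hl1 : (∑ k : {k : Fin p // k ≠ l}, |γ k + if k = k0 then t else 0|)
        ≤ L1 + |t| := by
      have h1 : ∀ k : {k : Fin p // k ≠ l},
          |γ k + if k = k0 then t else 0| ≤ |γ k| + (if k = k0 then |t| else 0) := by
        intro k; split <;> simp [abs_add_le]
      calc (∑ k : {k : Fin p // k ≠ l}, |γ k + if k = k0 then t else 0|)
          ≤ ∑ k : {k : Fin p // k ≠ l}, (|γ k| + if k = k0 then |t| else 0) :=
            Finset.sum_le_sum fun k _ => h1 k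
        _ = L1 + |t| := by
            rw [Finset.sum_add_distrib,
              Finset.sum_ite_eq' Finset.univ k0 (fun _ => |t|)]
            simp [hL1]
      -- done
    rw [hsq] at hm
    have hl1' : 2 * lam l * (∑ k : {k : Fin p // k ≠ l}, |γ k + if k = k0 then t else 0|)
        ≤ 2 * lam l * (L1 + |t|) :=
      mul_le_mul_of_nonneg_left hl1 (by linarith)
    have e1 : (S - 2 * t * (∑ i, X i (k0 : Fin p) * r i)
        + t ^ 2 * ∑ i, (X i (k0 : Fin p)) ^ 2) / n
        = S / n - 2 * t * ((∑ i, X i (k0 : Fin p) * r i) / n)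
          + t ^ 2 * ((∑ i, (X i (k0 : Fin p)) ^ 2) / n) := by ring
    rw [e1] at hm
    linarith
  -- off-diagonal bound
  have off : ∀ k0 : {k : Fin p // k ≠ l},
      |(∑ i, X i (k0 : Fin p) * r i) / n| ≤ lam l := by
    intro k0
    set P : ℝ := (∑ i, X i (k0 : Fin p) * r i) / n with hP
    set C : ℝ := (∑ i, (X i (k0 : Fin p)) ^ 2) / n with hC
    have hCnn : 0 ≤ C := by
      rw [hC]
      exact div_nonneg (Finset.sum_nonneg fun i _ => sq_nonneg _) (le_of_lt hn0)
    rw [abs_le]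
    constructor
    · have := aux_eps_le (-P) (lam l) (C / 2) (by linarith) ?_
      · linarith
      intro ε hε hε1
      have hk := key (-ε) k0
      rw [abs_neg, abs_of_pos hε] at hk
      have e : (-ε) ^ 2 * C = 2 * ε * (ε * (C / 2)) := by ring
      rw [e] at hk
      have h2 : 2 * ε * (-P) ≤ 2 * ε * (lam l + ε * (C / 2)) := by linarith
      have := le_of_mul_le_mul_left (by linarith : (2 * ε) * (-P) ≤ (2 * ε) * (lam l + ε * (C / 2))) (by linarith : (0:ℝ) < 2 * ε)
      linarith
    · refine aux_eps_le P (lam l) (C / 2) (by linarith) ?_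
      intro ε hε hε1
      have hk := key ε k0
      rw [abs_of_pos hε] at hk
      have e : ε ^ 2 * C = 2 * ε * (ε * (C / 2)) := by ring
      rw [e] at hk
      exact le_of_mul_le_mul_left (by linarith : (2 * ε) * P ≤ (2 * ε) * (lam l + ε * (C / 2))) (by linarith : (0:ℝ) < 2 * ε)
  -- diagonal key: scaling perturbation
  have keyd : ∀ t : ℝ, -1 ≤ t →
      2 * t * ((∑ i, (X i l - r i) * r i) / n) ≤
        t ^ 2 * ((∑ i, (X i l - r i) ^ 2) / n) + 2 * lam l * t * L1 := by
    intro t ht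
    have hm := hmin l (fun m => (1 + t) * γ m)
    have hres : ∀ i, X i l - (∑ k : {k : Fin p // k ≠ l},
        X i (k : Fin p) * ((1 + t) * γ k)) = r i - t * (X i l - r i) := by
      intro i
      have e : (∑ k : {k : Fin p // k ≠ l}, X i (k : Fin p) * ((1 + t) * γ k))
          = (1 + t) * ∑ k : {k : Fin p // k ≠ l}, X i (k : Fin p) * γ k := by
        rw [Finset.mul_sum]; exact Finset.sum_congr rfl fun k _ => by ring
      have e2 : X i l - r i = ∑ k : {k : Fin p // k ≠ l}, X i (k : Fin p) * γ k := by
        rw [hrdef]; ring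
      rw [e, ← e2]; ring
    have hsq : (∑ i, (X i l - ∑ k : {k : Fin p // k ≠ l},
        X i (k : Fin p) * ((1 + t) * γ k)) ^ 2)
        = S - 2 * t * (∑ i, (X i l - r i) * r i)
          + t ^ 2 * ∑ i, (X i l - r i) ^ 2 := by
      simp only [hres, hSdef]
      rw [Finset.mul_sum, Finset.mul_sum, ← Finset.sum_sub_distrib,
        ← Finset.sum_add_distrib]
      exact Finset.sum_congr rfl fun i _ => by ring
    have hl1 : (∑ k : {k : Fin p // k ≠ l}, |(1 + t) * γ k|) = (1 + t) * L1 := by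
      rw [hL1, Finset.mul_sum]
      refine Finset.sum_congr rfl fun k _ => ?_
      rw [abs_mul, abs_of_nonneg (by linarith : (0:ℝ) ≤ 1 + t)]
    rw [hsq, hl1] at hm
    have e1 : (S - 2 * t * (∑ i, (X i l - r i) * r i)
        + t ^ 2 * ∑ i, (X i l - r i) ^ 2) / n
        = S / n - 2 * t * ((∑ i, (X i l - r i) * r i) / n)
          + t ^ 2 * ((∑ i, (X i l - r i) ^ 2) / n) := by ring
    rw [e1] at hm
    nlinarith [hm]
  -- diagonal identity : B = lam l * L1
  have diagB : (∑ i, (X i l - r i) * r i) / n = lam l * L1 := by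
    set B : ℝ := (∑ i, (X i l - r i) * r i) / n with hB
    set D : ℝ := (∑ i, (X i l - r i) ^ 2) / n with hD
    have hDnn : 0 ≤ D := by
      rw [hD]
      exact div_nonneg (Finset.sum_nonneg fun i _ => sq_nonneg _) (le_of_lt hn0)
    have hub : B ≤ lam l * L1 := by
      refine aux_eps_le B (lam l * L1) (D / 2) (by linarith) ?_
      intro ε hε hε1
      have hk := keyd ε (by linarith)
      have e : ε ^ 2 * D = 2 * ε * (ε * (D / 2)) := by ring
      rw [e] at hk
      exact le_of_mul_le_mul_left (by nlinarith : (2 * ε) * B ≤ (2 * ε) * (lam l * L1 + ε * (D / 2))) (by linarith : (0:ℝ) < 2 * ε)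
    have hlb : lam l * L1 ≤ B := by
      have := aux_eps_le (-B) (-(lam l * L1)) (D / 2) (by linarith) ?_
      · linarith
      intro ε hε hε1
      have hk := keyd (-ε) (by linarith)
      have e : (-ε) ^ 2 * D = 2 * ε * (ε * (D / 2)) := by ring
      rw [e] at hk
      have := le_of_mul_le_mul_left (by nlinarith : (2 * ε) * (-B) ≤ (2 * ε) * (-(lam l * L1) + ε * (D / 2))) (by linarith : (0:ℝ) < 2 * ε)
      linarith
    linarith
  -- diagonal value
  have diagA : (∑ i, X i l * r i) / n = tau2 l := by
    have e : (∑ i, X i l * r i) = S + (∑ i, (X i l - r i) * r i) := by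
      rw [hSdef, ← Finset.sum_add_distrib]
      exact Finset.sum_congr rfl fun i _ => by ring
    rw [e, add_div, diagB, htau l]
  -- entry computation
  have entry : ∀ k : Fin p, (ThetaHat * Sigmahat) l k
      = ((∑ i, X i k * r i) / n) / tau2 l := by
    intro k
    have hrowsum : ∀ i, (∑ m : Fin p, ThetaHat l m * X i m) = r i / tau2 l := by
      intro i
      have hsplit : (∑ m : Fin p, ThetaHat l m * X i m)
          = ThetaHat l l * X i l
            + ∑ m ∈ Finset.univ.erase l, ThetaHat l m * X i m := by
        rw [← Finset.add_sum_erase Finset.univ _ (Finset.mem_univ l)]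
      have hsub : (∑ m ∈ Finset.univ.erase l, ThetaHat l m * X i m)
          = ∑ m : {k : Fin p // k ≠ l}, ThetaHat l (m : Fin p) * X i (m : Fin p) := by
        refine Finset.sum_subtype _ (fun x => ?_) _
        simp [Finset.mem_erase]
      have hdiag : ThetaHat l l = 1 / tau2 l := by rw [hTheta l l]; simp
      have hoffd : ∀ m : {k : Fin p // k ≠ l},
          ThetaHat l (m : Fin p) = -γ m / tau2 l := by
        intro m
        rw [hTheta l (m : Fin p)]
        rw [dif_neg m.2]
      rw [hsplit, hsub, hdiag]
      have : (∑ m : {k : Fin p // k ≠ l}, ThetaHat l (m : Fin p) * X i (m : Fin p))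
          = -(∑ m : {k : Fin p // k ≠ l}, X i (m : Fin p) * γ m) / tau2 l := by
        rw [← Finset.sum_neg_distrib, Finset.sum_div]
        refine Finset.sum_congr rfl fun m _ => ?_
        rw [hoffd m]; ring
      rw [this, hrdef]
      field_simp
      ring
    rw [Matrix.mul_apply, hSigma]
    have hSig : ∀ m, ((n : ℝ)⁻¹ • (X.transpose * X)) m k
        = (n : ℝ)⁻¹ * ∑ i, X i m * X i k := by
      intro m
      simp [Matrix.smul_apply, Matrix.mul_apply, Matrix.transpose_apply]
    simp only [hSig]
    calc (∑ m : Fin p, ThetaHat l m * ((n : ℝ)⁻¹ * ∑ i, X i m * X i k))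
        = ∑ m : Fin p, ∑ i, (n : ℝ)⁻¹ * ((ThetaHat l m * X i m) * X i k) := by
          refine Finset.sum_congr rfl fun m _ => ?_
          rw [Finset.mul_sum, Finset.mul_sum]
          exact Finset.sum_congr rfl fun i _ => by ring
      _ = ∑ i, ∑ m : Fin p, (n : ℝ)⁻¹ * ((ThetaHat l m * X i m) * X i k) :=
          Finset.sum_comm
      _ = ∑ i, (n : ℝ)⁻¹ * ((∑ m : Fin p, ThetaHat l m * X i m) * X i k) := by
          refine Finset.sum_congr rfl fun i _ => ?_
          rw [Finset.sum_mul, Finset.mul_sum]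
      _ = ∑ i, (n : ℝ)⁻¹ * ((r i / tau2 l) * X i k) := by
          simp only [hrowsum]
      _ = ((∑ i, X i k * r i) / n) / tau2 l := by
          rw [div_div, Finset.sum_div]
          exact Finset.sum_congr rfl fun i _ => by
            field_simp
  -- entrywise bound
  set M : ℝ := (Finset.univ.sup' (Finset.univ_nonempty_iff.mpr ⟨⟨0, by omega⟩⟩)
      fun j => lam j / tau2 j) with hM
  have hMl : lam l / tau2 l ≤ M :=
    Finset.le_sup' (fun j => lam j / tau2 j) (Finset.mem_univ l)
  have hMpos : 0 < M := lt_of_lt_of_le (div_pos hlamp hτ) hMl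
  have hEB : ∀ k : Fin p, |(ThetaHat * Sigmahat - 1) l k| ≤ M := by
    intro k
    rw [Matrix.sub_apply, entry k, Matrix.one_apply]
    by_cases hk : k = l
    · subst hk
      rw [diagA, if_pos rfl, div_self (ne_of_gt hτ)]
      simpa using le_of_lt hMpos
    · rw [if_neg (fun h => hk h.symm), sub_zero, abs_div,
        abs_of_pos hτ]
      calc |(∑ i, X i k * r i) / n| / tau2 l ≤ lam l / tau2 l := by
            have h := off ⟨k, hk⟩
            gcongr
        _ ≤ M := hMl
  -- final sum bound
  have hmv : (ThetaHat * Sigmahat - 1).mulVec v l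
      = ∑ k : Fin p, (ThetaHat * Sigmahat - 1) l k * v k := by
    simp [Matrix.mulVec, dotProduct]
  rw [hmv]
  calc |∑ k : Fin p, (ThetaHat * Sigmahat - 1) l k * v k|
      ≤ ∑ k : Fin p, |(ThetaHat * Sigmahat - 1) l k * v k| :=
        Finset.abs_sum_le_sum_abs _ _
    _ ≤ ∑ k : Fin p, M * |v k| := by
        refine Finset.sum_le_sum fun k _ => ?_
        rw [abs_mul]
        exact mul_le_mul_of_nonneg_right (hEB k) (abs_nonneg _)
    _ = M * ∑ k : Fin p, |v k| := by rw [Finset.mul_sum]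
end

section
/- Let (Ω, F, P) be a probability space and let U, V : Ω → ℝ be independent random variables. Let A, B > 0 and suppose that for every integer k ≥ 1, |U|^k and |V|^k are integrable with E[|U|^k] ≤ A^k k^{k/2} and E[|V|^k] ≤ B^k k^{k/2}. Then for every C > e·A·B, the random variable exp(|UV|/C) is integrable and E[exp(|UV|/C)] ≤ C/(C − eAB). -/
/-!
Expand `exp (|UV|/C)` in its power series. By independence
`E|UV|^k = E|U|^k E|V|^k ≤ (AB)^k k^k`, and `k^k ≤ e^k k!`, so the `k`-th term has expectation
at most `(eAB/C)^k`; monotone convergence sums this geometric series to `C/(C - eAB)`.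
-/

open MeasureTheory ProbabilityTheory Real
open scoped Nat

lemma pow_le_exp_one_pow_mul_factorial (n : ℕ) : (n : ℝ) ^ n ≤ exp 1 ^ n * n ! := by
  rw [← div_le_iff₀ (by positivity), exp_one_pow]
  exact Real.pow_div_factorial_le_exp (x := n) n.cast_nonneg n

section ExponentialMoment

variable {Ω : Type*} [MeasurableSpace Ω]

lemma lintegral_ofReal_exp_eq_tsum {μ : Measure Ω} {X : Ω → ℝ} (hX : AEMeasurable X μ)
    (hX0 : ∀ ω, 0 ≤ X ω) :
    ∫⁻ ω, ENNReal.ofReal (exp (X ω)) ∂μ =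
      ∑' k : ℕ, ∫⁻ ω, ENNReal.ofReal (X ω ^ k / k !) ∂μ := by
  rw [← lintegral_tsum fun k => ((hX.pow_const k).div_const _).ennreal_ofReal]
  refine lintegral_congr fun ω => ?_
  have := hX0 ω
  rw [exp_eq_exp_ℝ, NormedSpace.exp_eq_tsum_div,
    ENNReal.ofReal_tsum_of_nonneg (fun k => by positivity) (summable_pow_div_factorial _)]

theorem integrable_exp_div_and_integral_le_of_moment_le {P : Measure Ω} [IsProbabilityMeasure P]
    {X : Ω → ℝ} (hX : AEMeasurable X P) (hX0 : ∀ ω, 0 ≤ X ω) {c C : ℝ} (hc : 0 ≤ c)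
    (hcC : c < C)
    (hmom : ∀ k : ℕ, 1 ≤ k →
      Integrable (fun ω => X ω ^ k) P ∧ ∫ ω, X ω ^ k ∂P ≤ k ! * c ^ k) :
    Integrable (fun ω => exp (X ω / C)) P ∧ ∫ ω, exp (X ω / C) ∂P ≤ C / (C - c) := by
  have hC : 0 < C := hc.trans_lt hcC
  set r := c / C with hr
  have hr0 : 0 ≤ r := by positivity
  have hr1 : r < 1 := (div_lt_one hC).2 hcC
  have hterm : ∀ k : ℕ,
      ∫⁻ ω, ENNReal.ofReal ((X ω / C) ^ k / k !) ∂P ≤ ENNReal.ofReal (r ^ k) := by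
    intro k
    rcases Nat.eq_zero_or_pos k with rfl | hk
    · simp
    obtain ⟨hint, hle⟩ := hmom k hk
    have hnn : 0 ≤ᵐ[P] fun ω => (X ω / C) ^ k / k ! :=
      ae_of_all _ fun ω => by have := hX0 ω; positivity
    have hint' : Integrable (fun ω => (X ω / C) ^ k / k !) P := by
      simpa only [div_pow, div_div] using hint.div_const (C ^ k * k !)
    rw [← ofReal_integral_eq_lintegral_ofReal hint' hnn]
    refine ENNReal.ofReal_le_ofReal ?_
    calc ∫ ω, ((X ω / C) ^ k / k !) ∂P = (∫ ω, X ω ^ k ∂P) / (C ^ k * k !) := by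
          simp only [div_pow, div_div]; exact integral_div _ _
      _ ≤ (k ! * c ^ k) / (C ^ k * k !) := by gcongr
      _ = r ^ k := by rw [hr, div_pow]; field_simp
  have hlin : ∫⁻ ω, ENNReal.ofReal (exp (X ω / C)) ∂P ≤ ENNReal.ofReal (C / (C - c)) :=
    calc ∫⁻ ω, ENNReal.ofReal (exp (X ω / C)) ∂P
        = ∑' k : ℕ, ∫⁻ ω, ENNReal.ofReal ((X ω / C) ^ k / k !) ∂P :=
          lintegral_ofReal_exp_eq_tsum (hX.div_const C) fun ω => div_nonneg (hX0 ω) hC.le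
      _ ≤ ∑' k : ℕ, ENNReal.ofReal (r ^ k) := ENNReal.tsum_le_tsum hterm
      _ = ENNReal.ofReal (∑' k : ℕ, r ^ k) :=
          (ENNReal.ofReal_tsum_of_nonneg (fun k => pow_nonneg hr0 k)
            (summable_geometric_of_lt_one hr0 hr1)).symm
      _ = ENNReal.ofReal (C / (C - c)) := by
          rw [tsum_geometric_of_lt_one hr0 hr1, hr, one_sub_div hC.ne', inv_div]
  have hnn : 0 ≤ᵐ[P] fun ω => exp (X ω / C) := ae_of_all _ fun ω => (exp_pos _).le
  have hint : Integrable (fun ω => exp (X ω / C)) P :=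
    ⟨(measurable_exp.comp_aemeasurable (hX.div_const C)).aestronglyMeasurable,
      (hasFiniteIntegral_iff_ofReal hnn).2 (hlin.trans_lt ENNReal.ofReal_lt_top)⟩
  refine ⟨hint, ?_⟩
  rw [integral_eq_lintegral_of_nonneg_ae hnn hint.aestronglyMeasurable]
  have := sub_pos.2 hcC
  exact ENNReal.toReal_le_of_le_ofReal (by positivity) hlin

end ExponentialMoment

namespace ProbabilityTheory.IndepFun

variable {Ω : Type*} [MeasurableSpace Ω] {P : Measure Ω} {U V : Ω → ℝ}

lemma integrable_abs_mul_pow_and_integral_eq (hUV : IndepFun U V P) {k : ℕ}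
    (hU : Integrable (fun ω => |U ω| ^ k) P) (hV : Integrable (fun ω => |V ω| ^ k) P) :
    Integrable (fun ω => |U ω * V ω| ^ k) P ∧
      ∫ ω, |U ω * V ω| ^ k ∂P = (∫ ω, |U ω| ^ k ∂P) * ∫ ω, |V ω| ^ k ∂P := by
  have hind := hUV.comp (measurable_abs.pow_const k) (measurable_abs.pow_const k)
  simp only [abs_mul, mul_pow]
  exact ⟨hind.integrable_mul hU hV,
    hind.integral_fun_mul_eq_mul_integral hU.aestronglyMeasurable hV.aestronglyMeasurable⟩

lemma abs_mul_moment_le (hUV : IndepFun U V P) {A B : ℝ} (hA : 0 ≤ A) (hB : 0 ≤ B) {k : ℕ}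
    (hmomU : Integrable (fun ω => |U ω| ^ k) P ∧
      ∫ ω, |U ω| ^ k ∂P ≤ A ^ k * (k : ℝ) ^ ((k : ℝ) / 2))
    (hmomV : Integrable (fun ω => |V ω| ^ k) P ∧
      ∫ ω, |V ω| ^ k ∂P ≤ B ^ k * (k : ℝ) ^ ((k : ℝ) / 2)) :
    Integrable (fun ω => |U ω * V ω| ^ k) P ∧
      ∫ ω, |U ω * V ω| ^ k ∂P ≤ k ! * (exp 1 * A * B) ^ k := by
  obtain ⟨hint, heq⟩ := hUV.integrable_abs_mul_pow_and_integral_eq hmomU.1 hmomV.1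
  refine ⟨hint, ?_⟩
  have hUnn : 0 ≤ ∫ ω, |U ω| ^ k ∂P := integral_nonneg fun ω => by positivity
  have hVnn : 0 ≤ ∫ ω, |V ω| ^ k ∂P := integral_nonneg fun ω => by positivity
  have hhalf : (k : ℝ) ^ ((k : ℝ) / 2) * (k : ℝ) ^ ((k : ℝ) / 2) = (k : ℝ) ^ k := by
    rw [← sq, ← rpow_natCast _ 2, ← rpow_mul k.cast_nonneg, Nat.cast_ofNat,
      div_mul_cancel₀ _ two_ne_zero, rpow_natCast]
  calc ∫ ω, |U ω * V ω| ^ k ∂P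
      ≤ (A ^ k * (k : ℝ) ^ ((k : ℝ) / 2)) * (B ^ k * (k : ℝ) ^ ((k : ℝ) / 2)) := by
        rw [heq]; exact mul_le_mul hmomU.2 hmomV.2 hVnn (hUnn.trans hmomU.2)
    _ = (A * B) ^ k * (k : ℝ) ^ k := by rw [← hhalf]; ring
    _ ≤ (A * B) ^ k * (exp 1 ^ k * k !) := by
        gcongr; exact pow_le_exp_one_pow_mul_factorial k
    _ = k ! * (exp 1 * A * B) ^ k := by ring

end ProbabilityTheory.IndepFun

/-- Product of two independent sub-Gaussian (in the moment sense) random variables has a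
finite exponential moment: if `E|U|^k ≤ A^k k^{k/2}` and `E|V|^k ≤ B^k k^{k/2}` for all
`k ≥ 1`, then for any `C > e·A·B`, `E exp(|UV|/C) ≤ C/(C - eAB)`. -/
theorem stmt9 {Ω : Type*} [MeasurableSpace Ω] (P : Measure Ω) [IsProbabilityMeasure P]
    (U V : Ω → ℝ) (hU : Measurable U) (hV : Measurable V)
    (hUV : ProbabilityTheory.IndepFun U V P)
    (A B : ℝ) (hA : 0 < A) (hB : 0 < B)
    (hmomU : ∀ k : ℕ, 1 ≤ k → Integrable (fun ω => |U ω| ^ k) P ∧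
      ∫ ω, |U ω| ^ k ∂P ≤ A ^ k * (k : ℝ) ^ ((k : ℝ) / 2))
    (hmomV : ∀ k : ℕ, 1 ≤ k → Integrable (fun ω => |V ω| ^ k) P ∧
      ∫ ω, |V ω| ^ k ∂P ≤ B ^ k * (k : ℝ) ^ ((k : ℝ) / 2)) :
    ∀ C : ℝ, Real.exp 1 * A * B < C →
      Integrable (fun ω => Real.exp (|U ω * V ω| / C)) P ∧
      ∫ ω, Real.exp (|U ω * V ω| / C) ∂P ≤ C / (C - Real.exp 1 * A * B) := by
  intro C hC
  exact integrable_exp_div_and_integral_le_of_moment_le (X := fun ω => |U ω * V ω|)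
    (hU.mul hV).abs.aemeasurable (fun ω => abs_nonneg _) (by positivity) hC
    fun k hk => hUV.abs_mul_moment_le hA.le hB.le (hmomU k hk) (hmomV k hk)
end
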